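/- Arc replacement at a customer (dominance, case i ∈ N_c): let R' be a feasible second-level route for a satellite in the multigraph G' containing an arc (i,j,r₁) with i ∈ N_c and s(i,j,r₁) = k₁ ≠ 0, and suppose G' contains a parallel arc (i,j,r₂) with r₂ ≠ r₁ and s(i,j,r₂) = k₂ ≠ 0 such that d(i,j,r₂) ≤ d(i,j,r₁), c(i,j,r₂) ≤ c(i,j,r₁), and c_{ik₂} ≤ c_{ik₁}. Then the route obtained from R' by substituting (i,j,r₂) for (i,j,r₁) is a feasible second-level route that visits the same customers in the same order and whose total cost is at most the cost of R'. -/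

import Mathlib

open scoped Classical

/-- An E2EVRP second-level instance. -/
structure E2E (V : Type) where
  Ns : Set V
  Nc : Set V
  Nr : Set V
  q : V → ℝ
  Q2 : ℝ
  L : ℝ
  d : V → V → ℝ
  c : V → V → ℝ
  finNs : Ns.Finite
  finNc : Nc.Finite
  finNr : Nr.Finite
  disj_sc : Disjoint Ns Nc
  disj_sr : Disjoint Ns Nr
  disj_cr : Disjoint Nc Nr
  q_pos : ∀ i ∈ Nc, 0 < q i
  Q2_pos : 0 < Q2
  L_pos : 0 < L
  d_nonneg : ∀ i j, 0 ≤ d i j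
  c_nonneg : ∀ i j, 0 ≤ c i j

namespace E2E

variable {V : Type}

/-- Cost of a path in `G` starting at a given vertex and visiting the list in order. -/
def costG (I : E2E V) : V → List V → ℝ
  | _, [] => 0
  | u, v :: rest => I.d u v + I.costG v rest

/-- Battery feasibility in `G`: starting at vertex `u` with battery level `b`, every arc
decreases the level by its consumption, the level never drops below `0`, and the level is
reset to `L` after each visit to a charging station. -/
def feasG (I : E2E V) : ℝ → V → List V → Prop
  | _, _, [] => True
  | b, u, v :: rest =>
      I.c u v ≤ b ∧ I.feasG (if v ∈ I.Nr then I.L else b - I.c u v) v rest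

/-- The subsequence of customers of a list of vertices. -/
noncomputable def custSeq (I : E2E V) : List V → List V
  | [] => []
  | v :: rest => if v ∈ I.Nc then v :: I.custSeq rest else I.custSeq rest

/-- Total demand of the customers visited in a list of vertices. -/
noncomputable def demand (I : E2E V) (l : List V) : ℝ :=
  ((I.custSeq l).map I.q).sum

/-- `ArcOK I i j st` : `(i,j,st)` is an arc of the multigraph `G'` (`st = none` is the direct
arc, `st = some k` travels via charging station `k`). -/
def ArcOK (I : E2E V) (i j : V) (st : Option V) : Prop :=
  i ≠ j ∧ i ∈ I.Ns ∪ I.Nc ∧ j ∈ I.Ns ∪ I.Nc ∧ ¬(i ∈ I.Ns ∧ j ∈ I.Ns) ∧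
    match st with
    | none => I.c i j ≤ I.L
    | some k => k ∈ I.Nr ∧ I.c i k ≤ I.L ∧ I.c k j ≤ I.L

/-- Cost of an arc of `G'`. -/
def arcCost (I : E2E V) (i j : V) : Option V → ℝ
  | none => I.d i j
  | some k => I.d i k + I.d k j

/-- Consumption of an arc of `G'`. -/
def arcCons (I : E2E V) (i j : V) : Option V → ℝ
  | none => I.c i j
  | some k => I.c k j

/-- All arcs of a sequence of steps in `G'`, starting at a given vertex, satisfy `P`. -/
def ArcsSat (I : E2E V) (P : V → V → Option V → Prop) : V → List (V × Option V) → Prop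
  | _, [] => True
  | i, (j, st) :: rest => P i j st ∧ I.ArcsSat P j rest

/-- All steps are genuine arcs of the multigraph `G'`. -/
def arcsOK (I : E2E V) : V → List (V × Option V) → Prop :=
  I.ArcsSat I.ArcOK

/-- Cost in `G'` of a sequence of steps starting at a given vertex. -/
def costG' (I : E2E V) : V → List (V × Option V) → ℝ
  | _, [] => 0
  | i, (j, st) :: rest => I.arcCost i j st + I.costG' j rest

/-- Battery feasibility in `G'`: traversing a direct arc `(i,j,none)` with level `b` requires
`c i j ≤ b` and yields level `b - c i j`; traversing `(i,j,some k)` requires `c i k ≤ b` and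
yields level `L - c k j`. -/
def feasG' (I : E2E V) : ℝ → V → List (V × Option V) → Prop
  | _, _, [] => True
  | b, i, (j, none) :: rest => I.c i j ≤ b ∧ I.feasG' (b - I.c i j) j rest
  | b, i, (j, some k) :: rest => I.c i k ≤ b ∧ I.feasG' (I.L - I.c k j) j rest

/-- Battery levels at the successive vertices of a sequence of steps in `G'`. -/
def levelsG' (I : E2E V) : ℝ → V → List (V × Option V) → List ℝ
  | _, _, [] => []
  | b, i, (j, none) :: rest => (b - I.c i j) :: I.levelsG' (b - I.c i j) j rest
  | _, i, (j, some k) :: rest => (I.L - I.c k j) :: I.levelsG' (I.L - I.c k j) j rest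

/-- A second-level route for satellite `k` in the original graph `G`; `seq` is the list of
vertices visited after leaving `k` (hence ends with `k`). -/
def IsRouteG (I : E2E V) (k : V) (seq : List V) : Prop :=
  k ∈ I.Ns ∧ seq ≠ [] ∧ seq.getLast? = some k ∧
  (∀ v ∈ seq.dropLast, v ∈ I.Nc ∪ I.Nr) ∧
  (I.custSeq seq.dropLast).Nodup ∧
  List.Chain' (fun a b => ¬(a ∈ I.Nr ∧ b ∈ I.Nr)) (k :: seq) ∧
  I.demand seq.dropLast ≤ I.Q2 ∧
  I.feasG I.L k seq

/-- A second-level route for satellite `k` in the multigraph `G'`; `steps` is the list of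
arcs traversed, each step recording its target vertex and the optional charging station. -/
def IsRouteG' (I : E2E V) (k : V) (steps : List (V × Option V)) : Prop :=
  k ∈ I.Ns ∧ steps ≠ [] ∧ (steps.map Prod.fst).getLast? = some k ∧
  (∀ v ∈ (steps.map Prod.fst).dropLast, v ∈ I.Nc) ∧
  (steps.map Prod.fst).dropLast.Nodup ∧
  I.arcsOK k steps ∧
  I.demand (steps.map Prod.fst).dropLast ≤ I.Q2 ∧
  I.feasG' I.L k steps

/-- Expansion of a `G'` route into a `G` route: arcs via a station `k'` become the two-arc
path through `k'`, direct arcs stay direct. -/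
def expand : List (V × Option V) → List V
  | [] => []
  | (j, none) :: rest => j :: expand rest
  | (j, some k) :: rest => k :: j :: expand rest

/-- Contraction of a `G` route into a `G'` route: each visited charging station lying between
two non-station vertices is contracted into the corresponding arc of `G'`. -/
noncomputable def contract (I : E2E V) : List V → List (V × Option V)
  | [] => []
  | [v] => if v ∈ I.Nr then [] else [(v, none)]
  | v :: j :: rest =>
      if v ∈ I.Nr then (j, some v) :: I.contract rest
      else (v, none) :: I.contract (j :: rest)

end E2E

namespace E2E

lemma feasG'_mono {V : Type} (I : E2E V) :
    ∀ (l : List (V × Option V)) (u : V) (b b' : ℝ), b ≤ b' →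
      I.feasG' b u l → I.feasG' b' u l := by
  intro l
  induction l with
  | nil => intro u b b' _ _; trivial
  | cons p rest ih =>
    obtain ⟨j, st⟩ := p
    cases st with
    | none =>
      intro u b b' hbb hf
      obtain ⟨h1, h2⟩ := hf
      exact ⟨h1.trans hbb, ih j _ _ (by linarith) h2⟩
    | some k =>
      intro u b b' hbb hf
      obtain ⟨h1, h2⟩ := hf
      exact ⟨h1.trans hbb, h2⟩

lemma getLast?_getD_cons {V : Type} (a u : V) (l : List V) :
    ((a :: l).getLast?).getD u = (l.getLast?).getD a := by
  cases l with
  | nil => rfl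
  | cons b t =>
    rw [List.getLast?_cons_cons]
    cases h : (b :: t).getLast? with
    | none => simp [List.getLast?] at h
    | some x => rfl

lemma arcsOK_replace {V : Type} (I : E2E V) (j : V) (s₁ s₂ : Option V) (post : List (V × Option V)) :
    ∀ (pre : List (V × Option V)) (u : V),
      I.arcsOK u (pre ++ (j, s₁) :: post) →
      I.ArcOK (((pre.map Prod.fst).getLast?).getD u) j s₂ →
      I.arcsOK u (pre ++ (j, s₂) :: post) := by
  intro pre
  induction pre with
  | nil =>
    intro u h harc
    obtain ⟨_, h2⟩ := h
    exact ⟨harc, h2⟩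
  | cons p rest ih =>
    obtain ⟨a, st⟩ := p
    intro u h harc
    obtain ⟨h1, h2⟩ := h
    refine ⟨h1, ih a h2 ?_⟩
    simpa [getLast?_getD_cons] using harc

lemma feasG'_replace {V : Type} (I : E2E V) (j k₁ k₂ : V) (post : List (V × Option V))
    (hc : I.c k₂ j ≤ I.c k₁ j) :
    ∀ (pre : List (V × Option V)) (u : V) (b : ℝ),
      I.feasG' b u (pre ++ (j, some k₁) :: post) →
      I.c (((pre.map Prod.fst).getLast?).getD u) k₂ ≤
        I.c (((pre.map Prod.fst).getLast?).getD u) k₁ →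
      I.feasG' b u (pre ++ (j, some k₂) :: post) := by
  intro pre
  induction pre with
  | nil =>
    intro u b h hck
    obtain ⟨h1, h2⟩ := h
    refine ⟨le_trans (by simpa using hck) h1, ?_⟩
    exact I.feasG'_mono post j _ _ (by linarith) h2
  | cons p rest ih =>
    obtain ⟨a, st⟩ := p
    intro u b h hck
    cases st with
    | none =>
      obtain ⟨h1, h2⟩ := h
      exact ⟨h1, ih a _ h2 (by simpa [getLast?_getD_cons] using hck)⟩
    | some k =>
      obtain ⟨h1, h2⟩ := h
      exact ⟨h1, ih a _ h2 (by simpa [getLast?_getD_cons] using hck)⟩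

lemma costG'_replace {V : Type} (I : E2E V) (j : V) (s₁ s₂ : Option V) (post : List (V × Option V)) :
    ∀ (pre : List (V × Option V)) (u : V),
      I.arcCost (((pre.map Prod.fst).getLast?).getD u) j s₂ ≤
        I.arcCost (((pre.map Prod.fst).getLast?).getD u) j s₁ →
      I.costG' u (pre ++ (j, s₂) :: post) ≤ I.costG' u (pre ++ (j, s₁) :: post) := by
  intro pre
  induction pre with
  | nil =>
    intro u hd
    simp only [List.nil_append, costG']
    have := hd
    simp only [List.map_nil, List.getLast?, Option.getD] at this
    linarith
  | cons p rest ih =>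
    obtain ⟨a, st⟩ := p
    intro u hd
    simp only [List.cons_append, costG']
    have := ih a (by simpa [getLast?_getD_cons] using hd)
    exact add_le_add_right this _

/-- Arc replacement at a customer: if an arc `(i,j,some k₁)` of a feasible
second-level route in `G'`, whose source `i` is a customer, is replaced by a parallel arc
`(i,j,some k₂)`, `k₂ ≠ k₁`, with no larger cost, no larger consumption, and
`c i k₂ ≤ c i k₁`, the result is a feasible second-level route visiting the same customers
in the same order and with total cost at most that of the original route. -/
theorem arc_replacement_customer {V : Type} (I : E2E V) (k0 i j k₁ k₂ : V)
    (pre post : List (V × Option V))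
    (h : I.IsRouteG' k0 (pre ++ (j, some k₁) :: post))
    (hi : i = ((pre.map Prod.fst).getLast?).getD k0)
    (hiNc : i ∈ I.Nc)
    (hne : k₂ ≠ k₁)
    (harc : I.ArcOK i j (some k₂))
    (hd : I.arcCost i j (some k₂) ≤ I.arcCost i j (some k₁))
    (hc : I.arcCons i j (some k₂) ≤ I.arcCons i j (some k₁))
    (hck : I.c i k₂ ≤ I.c i k₁) :
    I.IsRouteG' k0 (pre ++ (j, some k₂) :: post) ∧
    (pre ++ (j, some k₂) :: post).map Prod.fst = (pre ++ (j, some k₁) :: post).map Prod.fst ∧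
    I.costG' k0 (pre ++ (j, some k₂) :: post) ≤ I.costG' k0 (pre ++ (j, some k₁) :: post) := by
  have hmap : (pre ++ (j, some k₂) :: post).map Prod.fst =
      (pre ++ (j, some k₁) :: post).map Prod.fst := by simp
  obtain ⟨h1, h2, h3, h4, h5, h6, h7, h8⟩ := h
  refine ⟨⟨h1, by simp, ?_, ?_, ?_, ?_, ?_, ?_⟩, hmap, ?_⟩
  · rw [hmap]; exact h3
  · rw [hmap]; exact h4
  · rw [hmap]; exact h5
  · exact I.arcsOK_replace j _ _ post pre k0 h6 (hi ▸ harc)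
  · unfold demand; rw [hmap]; exact h7
  · exact I.feasG'_replace j k₁ k₂ post hc pre k0 I.L h8 (hi ▸ hck)
  · exact I.costG'_replace j _ _ post pre k0 (hi ▸ hd)

end E2E
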